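/- If (ā,b̄) ∈ ℝⁿ×ℝⁿ satisfies ∇F(ā,b̄) = 0, then min{āᵢ², b̄ᵢ²} = 0 for every i ∈ {1,…,n}, i.e., for each i at least one of āᵢ and b̄ᵢ is zero. -/

import Mathlib

/-! Along the directions `(eᵢ, 0)` and `(0, eᵢ)` the derivatives of `F` at `(ā, b̄)` are
`2 āᵢ (gᵢ + μ)` and `2 b̄ᵢ (μ - gᵢ)`, where `gᵢ = ∂ᵢh(ā² - b̄²)`. At a stationary point both vanish,
and if `āᵢ` and `b̄ᵢ` were both nonzero then `gᵢ = -μ = μ`, impossible since `μ > 0`. -/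

section Hadamard

variable {n : ℕ}

def hadamardSq (x : EuclideanSpace ℝ (Fin n)) : EuclideanSpace ℝ (Fin n) :=
  WithLp.toLp 2 fun i => x i ^ 2

lemma differentiable_hadamardSq : Differentiable ℝ (hadamardSq (n := n)) :=
  (differentiable_piLp 2).2 fun i =>
    ((PiLp.proj 2 (fun _ : Fin n => ℝ) i).differentiable).pow 2

lemma hadamardSq_add_smul_single (x : EuclideanSpace ℝ (Fin n)) (i : Fin n) (t : ℝ) :
    hadamardSq (x + t • EuclideanSpace.single i 1) =
      hadamardSq x + (2 * x i * t + t ^ 2) • EuclideanSpace.single i 1 := by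
  ext j
  by_cases hj : j = i
  · subst hj
    simp only [hadamardSq, PiLp.add_apply, PiLp.smul_apply, PiLp.single_eq_same, smul_eq_mul]
    ring
  · simp [hadamardSq, hj]

lemma hasLineDerivAt_hadamardSq_single (x : EuclideanSpace ℝ (Fin n)) (i : Fin n) :
    HasLineDerivAt ℝ hadamardSq ((2 * x i) • EuclideanSpace.single i 1) x
      (EuclideanSpace.single i 1) := by
  have hpoly : HasDerivAt (fun t : ℝ => 2 * x i * t + t ^ 2) (2 * x i) 0 := by
    simpa using ((hasDerivAt_id (0 : ℝ)).const_mul (2 * x i)).fun_add (hasDerivAt_pow 2 (0 : ℝ))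
  unfold HasLineDerivAt
  simp_rw [hadamardSq_add_smul_single]
  exact (hpoly.smul_const _).const_add _

lemma hasLineDerivAt_norm_sq_single (x : EuclideanSpace ℝ (Fin n)) (i : Fin n) :
    HasLineDerivAt ℝ (‖·‖ ^ 2) (2 * x i) x (EuclideanSpace.single i 1) := by
  have := (((hasDerivAt_id (0 : ℝ)).smul_const (EuclideanSpace.single i (1 : ℝ))).const_add x).norm_sq
  simp only [id_eq, zero_smul, add_zero, one_smul, EuclideanSpace.inner_single_right,
    Real.ringHom_apply, one_mul] at this
  exact this

noncomputable def hdpObjective (h : EuclideanSpace ℝ (Fin n) → ℝ) (μ : ℝ)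
    (p : EuclideanSpace ℝ (Fin n) × EuclideanSpace ℝ (Fin n)) : ℝ :=
  h (hadamardSq p.1 - hadamardSq p.2) + μ * (‖p.1‖ ^ 2 + ‖p.2‖ ^ 2)

variable {h : EuclideanSpace ℝ (Fin n) → ℝ} {g : EuclideanSpace ℝ (Fin n) →L[ℝ] ℝ} {μ : ℝ}
  {a b : EuclideanSpace ℝ (Fin n)}

lemma hasLineDerivAt_hdpObjective_inl (hg : HasFDerivAt h g (hadamardSq a - hadamardSq b))
    (i : Fin n) :
    HasLineDerivAt ℝ (hdpObjective h μ) (2 * a i * (g (EuclideanSpace.single i 1) + μ)) (a, b)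
      (EuclideanSpace.single i 1, 0) := by
  have hsq := hg.comp_hasDerivAt_of_eq 0
    ((hasLineDerivAt_hadamardSq_single a i).sub_const (hadamardSq b)) (by simp)
  have hnorm := ((hasLineDerivAt_norm_sq_single a i).add_const (‖b‖ ^ 2)).const_mul μ
  unfold HasLineDerivAt
  convert hsq.add hnorm using 1
  · ext t; simp [hdpObjective]
  · simp only [map_smul, smul_eq_mul]; ring

lemma hasLineDerivAt_hdpObjective_inr (hg : HasFDerivAt h g (hadamardSq a - hadamardSq b))
    (i : Fin n) :
    HasLineDerivAt ℝ (hdpObjective h μ) (2 * b i * (μ - g (EuclideanSpace.single i 1))) (a, b)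
      (0, EuclideanSpace.single i 1) := by
  have hsq := hg.comp_hasDerivAt_of_eq 0
    ((hasLineDerivAt_hadamardSq_single b i).const_sub (hadamardSq a)) (by simp)
  have hnorm := ((hasLineDerivAt_norm_sq_single b i).const_add (‖a‖ ^ 2)).const_mul μ
  unfold HasLineDerivAt
  convert hsq.add hnorm using 1
  · ext t; simp [hdpObjective]
  · simp only [map_neg, map_smul, smul_eq_mul]; ring

lemma differentiableAt_hdpObjective (hh : DifferentiableAt ℝ h (hadamardSq a - hadamardSq b)) :
    DifferentiableAt ℝ (hdpObjective h μ) (a, b) := by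
  have hsq : DifferentiableAt ℝ (fun p : EuclideanSpace ℝ (Fin n) × EuclideanSpace ℝ (Fin n) =>
      hadamardSq p.1 - hadamardSq p.2) (a, b) :=
    ((differentiable_hadamardSq.comp differentiable_fst).sub
      (differentiable_hadamardSq.comp differentiable_snd)) _
  exact (hh.comp (a, b) hsq).add
    ((differentiableAt_fst.norm_sq ℝ).add (differentiableAt_snd.norm_sq ℝ) |>.const_mul μ)

lemma hdpObjective_eq_coords (h : EuclideanSpace ℝ (Fin n) → ℝ) (μ : ℝ) :
    hdpObjective h μ = fun p =>
      h (WithLp.toLp 2 (fun i => p.1 i ^ 2 - p.2 i ^ 2)) + μ * ∑ i, (p.1 i ^ 2 + p.2 i ^ 2) := by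
  ext p
  simp only [hdpObjective, EuclideanSpace.real_norm_sq_eq, Finset.sum_add_distrib]
  rfl

end Hadamard

lemma min_sq_eq_zero_of_mul_eq_zero {x y c μ : ℝ} (hμ : μ ≠ 0) (hx : 2 * x * (c + μ) = 0)
    (hy : 2 * y * (μ - c) = 0) : min (x ^ 2) (y ^ 2) = 0 := by
  rcases mul_eq_zero.1 hx with hx | hc
  · simp [(mul_eq_zero.1 hx).resolve_left two_ne_zero, sq_nonneg]
  · have hy : 2 * y = 0 := (mul_eq_zero.1 hy).resolve_right fun h' => hμ (by linarith)
    simp [(mul_eq_zero.1 hy).resolve_left two_ne_zero, sq_nonneg]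

theorem stmt5_general (n : ℕ)
    (h : EuclideanSpace ℝ (Fin n) → ℝ) (hh : ContDiff ℝ 2 h)
    (μ : ℝ) (hμ : 0 < μ)
    (F : EuclideanSpace ℝ (Fin n) × EuclideanSpace ℝ (Fin n) → ℝ)
    (hF : F = fun p =>
      h (WithLp.toLp 2 (fun i => p.1 i ^ 2 - p.2 i ^ 2)) + μ * ∑ i, (p.1 i ^ 2 + p.2 i ^ 2))
    (a b : EuclideanSpace ℝ (Fin n))
    (hstat : fderiv ℝ F (a, b) = 0) :
    ∀ i : Fin n, min (a i ^ 2) (b i ^ 2) = 0 := by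
  intro i
  rw [hF, ← hdpObjective_eq_coords] at hstat
  have hg := (hh.differentiable two_ne_zero (hadamardSq a - hadamardSq b)).hasFDerivAt
  have hcrit : HasFDerivAt (hdpObjective h μ) 0 (a, b) :=
    hstat ▸ (differentiableAt_hdpObjective (μ := μ) hg.differentiableAt).hasFDerivAt
  have ha := (hasLineDerivAt_hdpObjective_inl (μ := μ) hg i).unique (hcrit.hasLineDerivAt _)
  have hb := (hasLineDerivAt_hdpObjective_inr (μ := μ) hg i).unique (hcrit.hasLineDerivAt _)
  exact min_sq_eq_zero_of_mul_eq_zero hμ.ne' ha hb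

/-- If `∇F(ā,b̄) = 0` then `min{āᵢ², b̄ᵢ²} = 0` for every `i`. -/
theorem stmt5 (n : ℕ) (hn : 0 < n)
    (h : EuclideanSpace ℝ (Fin n) → ℝ) (hh : ContDiff ℝ 2 h)
    (μ : ℝ) (hμ : 0 < μ)
    (F : EuclideanSpace ℝ (Fin n) × EuclideanSpace ℝ (Fin n) → ℝ)
    (hF : F = fun p =>
      h (WithLp.toLp 2 (fun i => p.1 i ^ 2 - p.2 i ^ 2)) + μ * ∑ i, (p.1 i ^ 2 + p.2 i ^ 2))
    (a b : EuclideanSpace ℝ (Fin n))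
    (hstat : fderiv ℝ F (a, b) = 0) :
    ∀ i : Fin n, min (a i ^ 2) (b i ^ 2) = 0 :=
  stmt5_general n h hh μ hμ F hF a b hstat
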